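/- Protocol-level no-weak-dominance (separating profile), sincere case: Let σ = 1/2, k = ⌈n/2⌉, and fix member i with true ideal v* ≠ s and misreport ṽ ≠ v*. Consider the profile in which k − 1 other members vote v*, k − 1 other members vote ṽ, and the remaining n − 2k + 1 members vote s, while member i votes v*. Then: (a) the proposal v* has k-th largest utility entry equal to d(v*, s) > 0, hence is supported with score d(v*, s); (b) the proposal ṽ has k-th largest utility entry at most d(v*, s) − d(v*, ṽ) < d(v*, s). Hence v* strictly beats ṽ and wins, giving member i true utility d(v*, s). -/

import Mathlib

/-- The `k`-th largest entry of a vector (`k` counted from 1). -/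
noncomputable def kthLargest {n : ℕ} (u : Fin n → ℝ) (k : ℕ) : ℝ :=
  ((List.ofFn u).insertionSort (fun a b => b ≤ a)).getD (k - 1) 0

private lemma countP_ofFn' {n : ℕ} (u : Fin n → ℝ) (p : ℝ → Bool) :
    (List.ofFn u).countP p = (Finset.univ.filter (fun j => p (u j))).card := by
  rw [List.ofFn_eq_map, List.countP_map]
  simp only [Finset.filter, Finset.card, Fin.univ_def, List.countP_eq_length_filter,
    Multiset.filter_coe, Multiset.coe_card]
  simp [Function.comp_def]

private lemma kthLargest_sorted {n : ℕ} (u : Fin n → ℝ) :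
    ((List.ofFn u).insertionSort (fun a b => b ≤ a)).Pairwise (fun a b => b ≤ a) ∧
      ((List.ofFn u).insertionSort (fun a b => b ≤ a)).length = n := by
  haveI : IsTotal ℝ (fun a b => b ≤ a) := ⟨fun a b => le_total b a⟩
  haveI : IsTrans ℝ (fun a b => b ≤ a) := ⟨fun a b c h1 h2 => le_trans h2 h1⟩
  refine ⟨List.pairwise_insertionSort _ _, ?_⟩
  rw [(List.perm_insertionSort _ _).length_eq, List.length_ofFn]

private lemma kthLargest_ge {n k : ℕ} (hk1 : 1 ≤ k) (u : Fin n → ℝ) (c : ℝ)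
    (h : k ≤ (Finset.univ.filter (fun j => c ≤ u j)).card) :
    c ≤ kthLargest u k := by
  classical
  obtain ⟨hsort, hlen⟩ := kthLargest_sorted u
  set l := (List.ofFn u).insertionSort (fun a b => b ≤ a) with hl
  have hkn : k ≤ n := by
    calc k ≤ _ := h
    _ ≤ Finset.univ.card := Finset.card_filter_le _ _
    _ = n := by simp
  have hidx : k - 1 < l.length := by omega
  have hval : kthLargest u k = l.get ⟨k - 1, hidx⟩ := by
    rw [kthLargest, ← hl, List.getD_eq_getElem _ _ hidx]; rfl
  rw [hval]
  by_contra hlt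
  push_neg at hlt
  have hcount : l.countP (fun x => decide (c ≤ x)) =
      (Finset.univ.filter (fun j => c ≤ u j)).card := by
    rw [(List.perm_insertionSort _ _).countP_eq, countP_ofFn']
    simp
  have hdrop : ∀ x ∈ l.drop (k - 1), ¬ (c ≤ x) := by
    intro x hx
    obtain ⟨j, hj, hxe⟩ := List.mem_iff_getElem.mp hx
    have hjl : k - 1 + j < l.length := by
      rw [List.length_drop] at hj; omega
    rw [List.getElem_drop] at hxe
    have hle : l[k - 1 + j] ≤ l.get ⟨k - 1, hidx⟩ := by
      rcases Nat.eq_zero_or_pos j with rfl | hjpos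
      · simp
      · exact hsort.rel_get_of_lt (a := ⟨k - 1, hidx⟩) (b := ⟨k - 1 + j, hjl⟩)
          (by simp only [Fin.mk_lt_mk]; omega)
    rw [hxe] at hle
    intro hcx
    exact absurd (hcx.trans hle) (not_le.mpr hlt)
  have h0 : (l.drop (k - 1)).countP (fun x => decide (c ≤ x)) = 0 :=
    List.countP_eq_zero.mpr (by intro x hx; simpa using hdrop x hx)
  have hsplit : l.countP (fun x => decide (c ≤ x)) =
      (l.take (k - 1)).countP (fun x => decide (c ≤ x))
        + (l.drop (k - 1)).countP (fun x => decide (c ≤ x)) := by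
    conv_lhs => rw [← List.take_append_drop (k - 1) l]
    rw [List.countP_append]
  have htk : (l.take (k - 1)).countP (fun x => decide (c ≤ x)) ≤ k - 1 := by
    calc _ ≤ (l.take (k - 1)).length := List.countP_le_length
    _ ≤ k - 1 := by rw [List.length_take]; omega
  omega

private lemma kthLargest_le {n k : ℕ} (hk1 : 1 ≤ k) (hkn : k ≤ n) (u : Fin n → ℝ) (c : ℝ)
    (h : (Finset.univ.filter (fun j => c < u j)).card < k) :
    kthLargest u k ≤ c := by
  classical
  obtain ⟨hsort, hlen⟩ := kthLargest_sorted u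
  set l := (List.ofFn u).insertionSort (fun a b => b ≤ a) with hl
  have hidx : k - 1 < l.length := by omega
  have hval : kthLargest u k = l.get ⟨k - 1, hidx⟩ := by
    rw [kthLargest, ← hl, List.getD_eq_getElem _ _ hidx]; rfl
  rw [hval]
  by_contra hlt
  push_neg at hlt
  have hcount : l.countP (fun x => decide (c < x)) =
      (Finset.univ.filter (fun j => c < u j)).card := by
    rw [(List.perm_insertionSort _ _).countP_eq, countP_ofFn']
    simp
  have htake : ∀ x ∈ l.take k, c < x := by
    intro x hx
    obtain ⟨j, hj, hxe⟩ := List.mem_iff_getElem.mp hx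
    have hjk : j < k := by rw [List.length_take] at hj; omega
    rw [List.getElem_take] at hxe
    have hjl : j < l.length := by omega
    have hge : l.get ⟨k - 1, hidx⟩ ≤ l[j] := by
      rcases eq_or_lt_of_le (by omega : j ≤ k - 1) with heq | hltj
      · subst heq; simp
      · exact hsort.rel_get_of_lt (a := ⟨j, hjl⟩) (b := ⟨k - 1, hidx⟩)
          (by simp only [Fin.mk_lt_mk]; omega)
    rw [← hxe]
    exact lt_of_lt_of_le hlt hge
  have hck : (l.take k).countP (fun x => decide (c < x)) = (l.take k).length := by
    rw [List.countP_eq_length]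
    intro x hx; simpa using htake x hx
  have hlk : (l.take k).length = k := by rw [List.length_take]; omega
  have hsplit : l.countP (fun x => decide (c < x)) =
      (l.take k).countP (fun x => decide (c < x))
        + (l.drop k).countP (fun x => decide (c < x)) := by
    conv_lhs => rw [← List.take_append_drop k l]
    rw [List.countP_append]
  omega

/-- Separating profile, sincere case. With `σ = 1/2`, `k = ⌈n/2⌉`,
`k` voters (including member `i`) at `v*`, `k − 1` voters at `ṽ`, and the rest at `s`:
the proposal `v*` has `k`-th largest utility `d(v*, s) > 0` and is supported, while
`ṽ` scores at most `d(v*, s) − d(v*, ṽ) < d(v*, s)`; hence `v*` strictly beats `ṽ`. -/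
theorem separating_profile_sincere
    {X : Type*} [MetricSpace X] {n : ℕ} (hn : 0 < n)
    (k : ℕ) (hk : k = (n + 1) / 2)
    (s vstar vt : X) (hvs : vstar ≠ s) (hvt : vt ≠ vstar)
    (i : Fin n)
    (A B : Finset (Fin n)) (hAB : Disjoint A B)
    (hA : A.card = k) (hiA : i ∈ A) (hB : B.card = k - 1)
    (reported : Fin n → X)
    (hrA : ∀ j ∈ A, reported j = vstar)
    (hrB : ∀ j ∈ B, reported j = vt)
    (hrS : ∀ j : Fin n, j ∉ A → j ∉ B → reported j = s) :
    kthLargest (fun j => dist (reported j) s - dist (reported j) vstar) k = dist vstar s ∧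
    0 < dist vstar s ∧
    (k ≤ {j : Fin n | 0 < dist (reported j) s - dist (reported j) vstar}.ncard) ∧
    kthLargest (fun j => dist (reported j) s - dist (reported j) vt) k ≤
      dist vstar s - dist vstar vt ∧
    dist vstar s - dist vstar vt < dist vstar s ∧
    kthLargest (fun j => dist (reported j) s - dist (reported j) vt) k <
      kthLargest (fun j => dist (reported j) s - dist (reported j) vstar) k := by
  classical
  have hk1 : 1 ≤ k := by omega
  have hkn : k ≤ n := by
    have := hA ▸ (Finset.card_le_card (Finset.subset_univ A))
    simpa using this
  have hds : 0 < dist vstar s := dist_pos.mpr hvs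
  have hdt : 0 < dist vstar vt := dist_pos.mpr (fun h => hvt h.symm)
  set u1 : Fin n → ℝ := fun j => dist (reported j) s - dist (reported j) vstar with hu1
  set u2 : Fin n → ℝ := fun j => dist (reported j) s - dist (reported j) vt with hu2
  have hu1A : ∀ j ∈ A, u1 j = dist vstar s := by
    intro j hj; simp [hu1, hrA j hj]
  have hu2A : ∀ j ∈ A, u2 j = dist vstar s - dist vstar vt := by
    intro j hj; simp [hu2, hrA j hj, dist_comm vstar vt]
  -- (1) kthLargest u1 k = dist vstar s
  have hge1 : dist vstar s ≤ kthLargest u1 k := by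
    apply kthLargest_ge hk1
    calc k = A.card := hA.symm
    _ ≤ _ := Finset.card_le_card (fun j hj => Finset.mem_filter.mpr
        ⟨Finset.mem_univ j, le_of_eq (hu1A j hj).symm⟩)
  have hle1 : kthLargest u1 k ≤ dist vstar s := by
    apply kthLargest_le hk1 hkn
    have : (Finset.univ.filter (fun j => dist vstar s < u1 j)) = ∅ := by
      apply Finset.filter_false_of_mem
      intro j _
      by_cases hjA : j ∈ A
      · rw [hu1A j hjA]; exact lt_irrefl _
      by_cases hjB : j ∈ B
      · simp only [hu1, hrB j hjB, not_lt]
        have := dist_triangle vt vstar s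
        rw [dist_comm vstar s] at this ⊢
        linarith [dist_comm vt vstar ▸ this]
      · simp only [hu1, hrS j hjA hjB, dist_self, not_lt]
        have := dist_nonneg (x := s) (y := vstar)
        have := dist_nonneg (x := vstar) (y := s)
        linarith
    rw [this]; simp; omega
  refine ⟨le_antisymm hle1 hge1, hds, ?_, ?_, by linarith, ?_⟩
  -- (3) support count
  · have hsub : (↑A : Set (Fin n)) ⊆ {j : Fin n | 0 < u1 j} := by
      intro j hj
      simp only [Set.mem_setOf_eq]
      rw [hu1A j hj]; exact hds
    calc k = A.card := hA.symm
    _ = (↑A : Set (Fin n)).ncard := (Set.ncard_coe_finset A).symm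
    _ ≤ _ := Set.ncard_le_ncard hsub (Set.toFinite _)
  -- (4) kthLargest u2 k ≤ dist vstar s - dist vstar vt
  · apply kthLargest_le hk1 hkn
    have hsub : (Finset.univ.filter (fun j => dist vstar s - dist vstar vt < u2 j)) ⊆ B := by
      intro j hj
      rw [Finset.mem_filter] at hj
      by_contra hjB
      by_cases hjA : j ∈ A
      · rw [hu2A j hjA] at hj; exact lt_irrefl _ hj.2
      · have hj2 : u2 j = - dist s vt := by simp [hu2, hrS j hjA hjB]
        rw [hj2] at hj
        have := dist_triangle vstar s vt
        linarith [hj.2]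
    calc _ ≤ B.card := Finset.card_le_card hsub
    _ = k - 1 := hB
    _ < k := by omega
  -- (6) strict comparison
  · have h1 : kthLargest u1 k = dist vstar s := le_antisymm hle1 hge1
    have h2 : kthLargest u2 k ≤ dist vstar s - dist vstar vt := by
      apply kthLargest_le hk1 hkn
      have hsub : (Finset.univ.filter (fun j => dist vstar s - dist vstar vt < u2 j)) ⊆ B := by
        intro j hj
        rw [Finset.mem_filter] at hj
        by_contra hjB
        by_cases hjA : j ∈ A
        · rw [hu2A j hjA] at hj; exact lt_irrefl _ hj.2
        · have hj2 : u2 j = - dist s vt := by simp [hu2, hrS j hjA hjB]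
          rw [hj2] at hj
          have := dist_triangle vstar s vt
          linarith [hj.2]
      calc _ ≤ B.card := Finset.card_le_card hsub
      _ = k - 1 := hB
      _ < k := by omega
    rw [h1]; linarith
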